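/- Liouville theorem: Assume u ∈ 𝓛_s(ℝ^N) ∩ C^{1,1}_loc(ℝ^N) is bounded and satisfies (−Δ + m²)^s u(x) = f(u(x)) for all x ∈ ℝ^N, where f : ℝ → ℝ satisfies sup { (f(t₁) − f(t₂))/(t₁ − t₂) : inf u ≤ t₂ < t₁ ≤ sup u } < m^{2s}. Then u is identically equal to a constant C, and this constant satisfies f(C) = m^{2s} C. -/

import Mathlib

open MeasureTheory Filter Topology Metric Set
open scoped RealInnerProductSpace

noncomputable section

/-- Points of `ℝ^N`. -/
abbrev Pt (N : ℕ) := EuclideanSpace ℝ (Fin N)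

/-- The modified Bessel function of the second kind
`K_ν(r) = ∫_0^∞ e^{-r cosh t} cosh (ν t) dt`. -/
noncomputable def besselK (ν r : ℝ) : ℝ :=
  ∫ t in Set.Ioi (0:ℝ), Real.exp (-(r * Real.cosh t)) * Real.cosh (ν * t)

/-- The normalizing constant `c_{N,s}`. -/
noncomputable def cNs (N : ℕ) (s : ℝ) : ℝ :=
  2 ^ (1 - (N : ℝ)/2 + s) * Real.pi ^ (-(N : ℝ)/2) * (s * (1 - s) / Real.Gamma (2 - s))

/-- Pointwise value of the pseudo-relativistic Schrödinger operator `(-Δ + m²)^s u (x)`,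
defined through the principal value limit (`limUnder` equals the limit whenever it exists). -/
noncomputable def psOp (N : ℕ) (s m : ℝ) (u : Pt N → ℝ) (x : Pt N) : ℝ :=
  cNs N s * m ^ ((N : ℝ)/2 + s) *
    limUnder (𝓝[>] (0:ℝ)) (fun ε : ℝ =>
      ∫ y in {y : Pt N | ε < dist x y},
        (u x - u y) * (dist x y) ^ (-((N : ℝ)/2 + s)) *
          besselK ((N : ℝ)/2 + s) (m * dist x y)) +
  m ^ (2 * s) * u x

/-- The weighted integrability class `𝓛_s(ℝ^N)`. -/
def memLs (N : ℕ) (s : ℝ) (u : Pt N → ℝ) : Prop :=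
  AEMeasurable u ∧
    (∫⁻ x : Pt N, ENNReal.ofReal
      (Real.exp (-‖x‖) * |u x| / (1 + ‖x‖ ^ (((N : ℝ) + 1)/2 + s)))) < ⊤

/-- `u` is `C^{1,1}` in a neighborhood of `x₀`. -/
def C11At (N : ℕ) (u : Pt N → ℝ) (x₀ : Pt N) : Prop :=
  ∃ ε > 0, DifferentiableOn ℝ u (ball x₀ ε) ∧
    ∃ K : NNReal, LipschitzOnWith K (fderiv ℝ u) (ball x₀ ε)

/-- `u ∈ C^{1,1}_loc(Ω)`: near every point of `Ω`, `u` is differentiable with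
Lipschitz gradient. -/
def C11loc (N : ℕ) (Ω : Set (Pt N)) (u : Pt N → ℝ) : Prop :=
  ∀ x ∈ Ω, ∃ ε > 0, ball x ε ⊆ Ω ∧ DifferentiableOn ℝ u (ball x ε) ∧
    ∃ K : NNReal, LipschitzOnWith K (fderiv ℝ u) (ball x ε)

/-- The open half-space `Σ = {x : ⟪a,x⟫ < b}` on one side of the hyperplane
`T = {x : ⟪a,x⟫ = b}` (`a` a unit vector). -/
def halfSpace (N : ℕ) (a : Pt N) (b : ℝ) : Set (Pt N) := {x | (inner ℝ a x : ℝ) < b}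

/-- Reflection `x̃` of `x` across the hyperplane `T = {x : ⟪a,x⟫ = b}` (`a` a unit vector). -/
def reflHyp (N : ℕ) (a : Pt N) (b : ℝ) (x : Pt N) : Pt N :=
  x + (2 * (b - (inner ℝ a x : ℝ))) • a

/-!
The kernel `|z|^{-ν} K_ν(m|z|)` (with `ν = N/2 + s`) is bounded by `|z|^{-(N+2s+γ)}` for every
`γ > 0`, because `K_ν(r) ≲ r^{-(ν+γ)}`. Taking `γ = 1 - s`, it is integrable away from the origin
and against `min (|z|², 1)`, so for bounded `C^{1,1}` functions the principal value exists and the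
truncated integrals are controlled by the second differences `2u(x) - u(x+z) - u(x-z)`.

Fix a shift `h` and let `w = u - u(· + h)`, `S = sup w`. Adding to `w` a bump of height `2δ`
centred at a point where `w > S - δ` yields a point `x` with `w x > S - δ` at which `w + bump`
attains its global maximum, so the truncated integrals of `w` at `x` are at least `-Cδ`.
Subtracting the equation at `x + h` from the one at `x` and using the one-sided Lipschitz bound
`L < m^{2s}` on `f` gives `(m^{2s} - L) w(x) ≤ c C δ`; letting `δ → 0` gives `S ≤ 0`. Hence
`u x ≤ u (x + h)` for all `x, h`, so `u` is a constant `C`, and at a constant the operator is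
`m^{2s} C`.
-/

lemma exp_neg_le_mul_rpow_neg {a X : ℝ} (ha : 0 < a) (hX : 0 < X) :
    Real.exp (-X) ≤ a ^ a * Real.exp (-a) * X ^ (-a) := by
  rw [Real.rpow_def_of_pos ha, Real.rpow_def_of_pos hX, ← Real.exp_add, ← Real.exp_add,
    Real.exp_le_exp]
  have h := Real.log_le_sub_one_of_pos (div_pos hX ha)
  rw [Real.log_div hX.ne' ha.ne', le_sub_iff_add_le, le_div_iff₀ ha] at h
  linarith

lemma besselK_integrand_le {ν γ r t : ℝ} (hν : 0 ≤ ν) (hγ : 0 < γ) (hr : 0 < r) (ht : 0 ≤ t) :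
    Real.exp (-(r * Real.cosh t)) * Real.cosh (ν * t) ≤
      (ν + γ) ^ (ν + γ) * Real.exp (-(ν + γ)) * 2 ^ (ν + γ) * r ^ (-(ν + γ)) *
        Real.exp (-γ * t) := by
  set a := ν + γ
  have ha : 0 < a := by positivity
  have hcosh : Real.exp t / 2 ≤ Real.cosh t := by
    rw [Real.cosh_eq]; linarith [Real.exp_pos (-t)]
  have hcosh_rpow : Real.cosh t ^ (-a) ≤ 2 ^ a * Real.exp (-a * t) := by
    calc Real.cosh t ^ (-a) ≤ (Real.exp t / 2) ^ (-a) :=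
          Real.rpow_le_rpow_of_nonpos (by positivity) hcosh (by linarith)
      _ = 2 ^ a * Real.exp (-a * t) := by
          rw [Real.div_rpow (Real.exp_pos t).le zero_le_two, ← Real.exp_mul,
            Real.rpow_neg zero_le_two, div_inv_eq_mul, mul_comm, mul_comm t]
  have hcosh_nu : Real.cosh (ν * t) ≤ Real.exp (ν * t) := by
    rw [Real.cosh_eq]
    linarith [Real.exp_le_exp.2 (show -(ν * t) ≤ ν * t by nlinarith)]
  calc Real.exp (-(r * Real.cosh t)) * Real.cosh (ν * t)
      ≤ (a ^ a * Real.exp (-a) * (r * Real.cosh t) ^ (-a)) * Real.exp (ν * t) :=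
        mul_le_mul (exp_neg_le_mul_rpow_neg ha (by positivity)) hcosh_nu
          (Real.cosh_pos _).le (by positivity)
    _ = a ^ a * Real.exp (-a) * r ^ (-a) * Real.cosh t ^ (-a) * Real.exp (ν * t) := by
        rw [Real.mul_rpow hr.le (Real.cosh_pos t).le]; ring
    _ ≤ a ^ a * Real.exp (-a) * r ^ (-a) * (2 ^ a * Real.exp (-a * t)) * Real.exp (ν * t) := by
        gcongr
    _ = a ^ a * Real.exp (-a) * 2 ^ a * r ^ (-a) * Real.exp (-γ * t) := by
        rw [show -γ * t = -a * t + ν * t by ring, Real.exp_add]; ring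

lemma integrableOn_besselK_integrand {ν r : ℝ} (hν : 0 ≤ ν) (hr : 0 < r) :
    IntegrableOn (fun t => Real.exp (-(r * Real.cosh t)) * Real.cosh (ν * t)) (Ioi 0) := by
  refine ((exp_neg_integrableOn_Ioi 0 one_pos).const_mul
    ((ν + 1) ^ (ν + 1) * Real.exp (-(ν + 1)) * 2 ^ (ν + 1) * r ^ (-(ν + 1)))).mono'
      (by fun_prop) ?_
  filter_upwards [ae_restrict_mem measurableSet_Ioi] with t ht
  rw [Real.norm_of_nonneg (by positivity)]
  exact besselK_integrand_le hν one_pos hr (le_of_lt ht)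

lemma besselK_nonneg (ν r : ℝ) : 0 ≤ besselK ν r :=
  setIntegral_nonneg measurableSet_Ioi fun _ _ => by positivity

lemma measurable_besselK (ν : ℝ) : Measurable (besselK ν) :=
  (StronglyMeasurable.integral_prod_right' (ν := volume.restrict (Ioi 0))
    (f := fun p : ℝ × ℝ => Real.exp (-(p.1 * Real.cosh p.2)) * Real.cosh (ν * p.2))
    (by fun_prop : Continuous _).stronglyMeasurable).measurable

lemma exists_besselK_le_rpow {ν γ : ℝ} (hν : 0 ≤ ν) (hγ : 0 < γ) :
    ∃ C, ∀ r, 0 < r → besselK ν r ≤ C * r ^ (-(ν + γ)) := by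
  set M := (ν + γ) ^ (ν + γ) * Real.exp (-(ν + γ)) * 2 ^ (ν + γ)
  refine ⟨M * ∫ t in Ioi (0:ℝ), Real.exp (-γ * t), fun r hr => ?_⟩
  calc besselK ν r ≤ ∫ t in Ioi (0:ℝ), M * r ^ (-(ν + γ)) * Real.exp (-γ * t) :=
        setIntegral_mono_on (integrableOn_besselK_integrand hν hr)
          ((exp_neg_integrableOn_Ioi 0 hγ).const_mul _) measurableSet_Ioi
          fun t ht => besselK_integrand_le hν hγ hr (le_of_lt ht)
    _ = _ := by rw [integral_const_mul]; ring

lemma integrableOn_norm_rpow_neg_of_norm_gt {E : Type*} [NormedAddCommGroup E] [NormedSpace ℝ E]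
    [FiniteDimensional ℝ E] [MeasurableSpace E] [BorelSpace E] {μ : Measure E}
    [μ.IsAddHaarMeasure] {α ε : ℝ} (hα : (Module.finrank ℝ E : ℝ) < α) (hε : 0 < ε) :
    IntegrableOn (fun z : E => ‖z‖ ^ (-α)) {z | ε < ‖z‖} μ := by
  have hα0 : 0 ≤ α := le_trans (Nat.cast_nonneg _) hα.le
  refine ((integrable_one_add_norm hα).const_mul (((1 + ε) / ε) ^ α)).integrableOn.mono'
    (by fun_prop : Measurable fun z : E => ‖z‖ ^ (-α)).aestronglyMeasurable ?_
  have hmeas : MeasurableSet {z : E | ε < ‖z‖} := measurableSet_lt measurable_const measurable_norm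
  filter_upwards [ae_restrict_mem hmeas] with z (hz : ε < ‖z‖)
  have hz0 : 0 < ‖z‖ := hε.trans hz
  have hle : 1 + ‖z‖ ≤ (1 + ε) / ε * ‖z‖ := by
    rw [div_mul_eq_mul_div, le_div_iff₀ hε]; nlinarith
  rw [Real.norm_of_nonneg (by positivity)]
  calc ‖z‖ ^ (-α) = ((1 + ε) / ε) ^ α * ((1 + ε) / ε * ‖z‖) ^ (-α) := by
        rw [Real.mul_rpow (by positivity) hz0.le, ← mul_assoc, ← Real.rpow_add (by positivity),
          add_neg_cancel, Real.rpow_zero, one_mul]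
    _ ≤ ((1 + ε) / ε) ^ α * (1 + ‖z‖) ^ (-α) :=
        mul_le_mul_of_nonneg_left (Real.rpow_le_rpow_of_nonpos (by positivity) hle (by linarith))
          (by positivity)

def psKernel (N : ℕ) (s m : ℝ) (z : Pt N) : ℝ :=
  ‖z‖ ^ (-((N : ℝ) / 2 + s)) * besselK ((N : ℝ) / 2 + s) (m * ‖z‖)

section psKernel

variable {N : ℕ} {s m : ℝ}

lemma psKernel_nonneg (z : Pt N) : 0 ≤ psKernel N s m z :=
  mul_nonneg (Real.rpow_nonneg (norm_nonneg z) _) (besselK_nonneg _ _)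

lemma measurable_psKernel : Measurable (psKernel N s m) :=
  (by fun_prop : Measurable fun z : Pt N => ‖z‖ ^ (-((N : ℝ) / 2 + s))).mul
    ((measurable_besselK _).comp (by fun_prop))

lemma exists_psKernel_le_rpow (hs : 0 < s) (hm : 0 < m) {γ : ℝ} (hγ : 0 < γ) :
    ∃ C, ∀ z : Pt N, psKernel N s m z ≤ C * ‖z‖ ^ (-((N : ℝ) + 2 * s + γ)) := by
  set ν := (N : ℝ) / 2 + s
  have hν : 0 < ν := by positivity
  obtain ⟨C, hC⟩ := exists_besselK_le_rpow hν.le hγ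
  refine ⟨C * m ^ (-(ν + γ)), fun z => ?_⟩
  rcases eq_or_ne z 0 with rfl | hz
  -- both sides vanish at the origin, by the convention `0 ^ x = 0` for `x ≠ 0`
  · have hα : -((N : ℝ) + 2 * s + γ) ≠ 0 := by have : (0 : ℝ) ≤ N := N.cast_nonneg; linarith
    rw [psKernel, norm_zero, Real.zero_rpow (neg_ne_zero.2 hν.ne'), Real.zero_rpow hα]
    simp
  have hz0 : 0 < ‖z‖ := norm_pos_iff.2 hz
  calc psKernel N s m z ≤ ‖z‖ ^ (-ν) * (C * (m * ‖z‖) ^ (-(ν + γ))) :=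
        mul_le_mul_of_nonneg_left (hC _ (by positivity)) (by positivity)
    _ = C * m ^ (-(ν + γ)) * ‖z‖ ^ (-((N : ℝ) + 2 * s + γ)) := by
        rw [Real.mul_rpow hm.le hz0.le, show -((N : ℝ) + 2 * s + γ) = -ν + -(ν + γ) by ring,
          Real.rpow_add hz0]
        ring

lemma integrableOn_psKernel_of_norm_gt (hs : 0 < s) (hm : 0 < m) {ε : ℝ} (hε : 0 < ε) :
    IntegrableOn (psKernel N s m) {z | ε < ‖z‖} := by
  obtain ⟨C, hC⟩ := exists_psKernel_le_rpow (N := N) hs hm one_pos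
  have hα : (Module.finrank ℝ (Pt N) : ℝ) < N + 2 * s + 1 := by
    rw [finrank_euclideanSpace_fin]; linarith
  refine ((integrableOn_norm_rpow_neg_of_norm_gt hα hε).const_mul C).mono'
    measurable_psKernel.aestronglyMeasurable (ae_of_all _ fun z => ?_)
  rw [Real.norm_of_nonneg (psKernel_nonneg z)]
  exact hC z

lemma integrable_min_sq_one_mul_psKernel (hN : 1 ≤ N) (hs : s ∈ Ioo 0 1) (hm : 0 < m) :
    Integrable (fun z : Pt N => min (‖z‖ ^ 2) 1 * psKernel N s m z) := by
  have hmeas : Measurable fun z : Pt N => min (‖z‖ ^ 2) 1 * psKernel N s m z :=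
    (by fun_prop : Measurable fun z : Pt N => min (‖z‖ ^ 2) 1).mul measurable_psKernel
  have hnonneg : ∀ z : Pt N, 0 ≤ min (‖z‖ ^ 2) 1 * psKernel N s m z :=
    fun z => mul_nonneg (le_min (sq_nonneg _) zero_le_one) (psKernel_nonneg z)
  obtain ⟨C, hC⟩ := exists_psKernel_le_rpow (N := N) hs.1 hm (sub_pos.2 hs.2)
  have h_ball : IntegrableOn (fun z : Pt N => min (‖z‖ ^ 2) 1 * psKernel N s m z) (ball 0 1) := by
    refine integrableOn_ball_of_norm_le_rpow (α := (N : ℝ) + s - 1) (C := C)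
      (by simpa using hN) (by simp; linarith [hs.2]) (ae_of_all _ fun z => ?_)
      hmeas.aestronglyMeasurable
    have hN' : (1 : ℝ) ≤ N := by exact_mod_cast hN
    rw [Real.norm_of_nonneg (hnonneg z)]
    calc min (‖z‖ ^ 2) 1 * psKernel N s m z
        ≤ ‖z‖ ^ (2 : ℝ) * (C * ‖z‖ ^ (-((N : ℝ) + 2 * s + (1 - s)))) := by
          rw [Real.rpow_two]
          exact mul_le_mul (min_le_left _ _) (hC z) (psKernel_nonneg z) (sq_nonneg _)
      _ = C * ‖z‖ ^ (-((N : ℝ) + s - 1)) := by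
          rw [mul_left_comm, ← Real.rpow_add' (norm_nonneg z) (by linarith [hs.1])]
          ring_nf
  have h_out : IntegrableOn (fun z : Pt N => min (‖z‖ ^ 2) 1 * psKernel N s m z)
      {z | 1 / 2 < ‖z‖} := by
    refine (integrableOn_psKernel_of_norm_gt hs.1 hm one_half_pos).mono'
      hmeas.aestronglyMeasurable (ae_of_all _ fun z => ?_)
    rw [Real.norm_of_nonneg (hnonneg z)]
    exact mul_le_of_le_one_left (psKernel_nonneg z) (min_le_right _ _)
  refine integrableOn_univ.1 ((h_ball.union h_out).mono_set fun z _ => ?_)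
  by_cases hz : ‖z‖ < 1
  · exact Or.inl (mem_ball_zero_iff.2 hz)
  · exact Or.inr (show (1 : ℝ) / 2 < ‖z‖ by linarith)

end psKernel

lemma abs_secondDiff_le_of_lipschitzOnWith {E : Type*} [NormedAddCommGroup E] [NormedSpace ℝ E]
    {v : E → ℝ} {x z : E} {ρ : ℝ} {K : NNReal}
    (hd : DifferentiableOn ℝ v (ball x ρ)) (hlip : LipschitzOnWith K (fderiv ℝ v) (ball x ρ))
    (hz : ‖z‖ < ρ) :
    |2 * v x - v (x + z) - v (x - z)| ≤ 2 * K * ‖z‖ ^ 2 := by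
  have hmem : ∀ t ∈ Icc (0 : ℝ) 1, x + t • z ∈ ball x ρ ∧ x - t • z ∈ ball x ρ := by
    intro t ht
    have h : ‖t • z‖ < ρ := by
      rw [norm_smul, Real.norm_of_nonneg ht.1]
      exact lt_of_le_of_lt (mul_le_of_le_one_left (norm_nonneg z) ht.2) hz
    exact ⟨by simpa [mem_ball_iff_norm] using h, by simpa [mem_ball_iff_norm] using h⟩
  have hderiv : ∀ t ∈ Icc (0 : ℝ) 1,
      HasDerivWithinAt (fun t : ℝ => v (x + t • z) + v (x - t • z))
        ((fderiv ℝ v (x + t • z) - fderiv ℝ v (x - t • z)) z) (Icc 0 1) t := by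
    intro t ht
    have hv : ∀ y ∈ ball x ρ, HasFDerivAt v (fderiv ℝ v y) y := fun y hy =>
      (hd.differentiableAt (isOpen_ball.mem_nhds hy)).hasFDerivAt
    have h₁ := (hv _ (hmem t ht).1).comp_hasDerivAt t
      (((hasDerivAt_id t).smul_const z).const_add x)
    have h₂ := (hv _ (hmem t ht).2).comp_hasDerivAt t
      (((hasDerivAt_id t).smul_const z).const_sub x)
    exact (h₁.add h₂).hasDerivWithinAt.congr_deriv (by simp [sub_eq_add_neg])
  have hbound : ∀ t ∈ Ico (0 : ℝ) 1,
      ‖(fderiv ℝ v (x + t • z) - fderiv ℝ v (x - t • z)) z‖ ≤ 2 * K * ‖z‖ ^ 2 := by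
    intro t ht
    obtain ⟨h₁, h₂⟩ := hmem t (Ico_subset_Icc_self ht)
    have hdist : dist (x + t • z) (x - t • z) = 2 * t * ‖z‖ := by
      rw [dist_eq_norm, show x + t • z - (x - t • z) = (2 * t) • z by module, norm_smul,
        Real.norm_of_nonneg (by linarith [ht.1])]
    calc ‖(fderiv ℝ v (x + t • z) - fderiv ℝ v (x - t • z)) z‖
        ≤ ‖fderiv ℝ v (x + t • z) - fderiv ℝ v (x - t • z)‖ * ‖z‖ :=
          ContinuousLinearMap.le_opNorm _ z
      _ ≤ K * (2 * t * ‖z‖) * ‖z‖ := by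
          rw [← dist_eq_norm, ← hdist]
          exact mul_le_mul_of_nonneg_right (hlip.dist_le_mul _ h₁ _ h₂) (norm_nonneg z)
      _ ≤ 2 * K * ‖z‖ ^ 2 := by
          have : 0 ≤ (K : ℝ) * ‖z‖ ^ 2 * (1 - t) := by have := ht.2; positivity
          nlinarith
  have := norm_image_sub_le_of_norm_deriv_le_segment' hderiv hbound 1
    (right_mem_Icc.2 zero_le_one)
  rw [Real.norm_eq_abs, ← abs_neg] at this
  simpa [two_mul, sub_sub, add_comm] using this

lemma abs_secondDiff_le_of_abs_le {E : Type*} [AddGroup E] {v : E → ℝ} {B : ℝ}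
    (hvb : ∀ y, |v y| ≤ B) (x z : E) :
    |2 * v x - v (x + z) - v (x - z)| ≤ 4 * B := by
  have := hvb x; have := hvb (x + z); have := hvb (x - z)
  rw [abs_le] at *
  constructor <;> linarith

lemma abs_le_mul_min_sq_one {E : Type*} [NormedAddCommGroup E] {D : E → ℝ} {ρ K M : ℝ}
    (hρ : 0 < ρ) (hK : 0 ≤ K) (hM : 0 ≤ M) (hloc : ∀ z, ‖z‖ < ρ → |D z| ≤ K * ‖z‖ ^ 2)
    (hglob : ∀ z, |D z| ≤ M) (z : E) :
    |D z| ≤ (K + M / ρ ^ 2 + M) * min (‖z‖ ^ 2) 1 := by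
  have hMρ : 0 ≤ M / ρ ^ 2 := by positivity
  rcases le_or_gt (‖z‖ ^ 2) 1 with h1 | h1
  · rw [min_eq_left h1]
    rcases lt_or_ge ‖z‖ ρ with hz | hz
    · nlinarith [hloc z hz, sq_nonneg ‖z‖]
    · have : M ≤ M / ρ ^ 2 * ‖z‖ ^ 2 := by
        rw [div_mul_eq_mul_div, le_div_iff₀ (by positivity)]
        exact mul_le_mul_of_nonneg_left (pow_le_pow_left₀ hρ.le hz 2) hM
      nlinarith [hglob z, sq_nonneg ‖z‖]
  · rw [min_eq_right h1.le]
    linarith [hglob z]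

lemma ContDiffBump.exists_abs_secondDiff_le {E : Type*} [NormedAddCommGroup E]
    [InnerProductSpace ℝ E] [FiniteDimensional ℝ E] {c : E} (φ : ContDiffBump c) :
    ∃ K, 0 ≤ K ∧ ∀ x z : E, |2 * φ x - φ (x + z) - φ (x - z)| ≤ K * min (‖z‖ ^ 2) 1 := by
  obtain ⟨K, hK⟩ := ContDiff.lipschitzWith_of_hasCompactSupport
    (φ.hasCompactSupport.fderiv ℝ) ((φ.contDiff (n := 2)).fderiv_right (m := 1) le_rfl)
    one_ne_zero
  have hφ : ∀ y, |φ y| ≤ 1 := fun y => abs_le.2 ⟨by linarith [φ.nonneg (x := y)], φ.le_one⟩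
  exact ⟨_, by positivity, fun x z => abs_le_mul_min_sq_one
    (D := fun z => 2 * φ x - φ (x + z) - φ (x - z)) (K := 2 * K) (M := 4 * 1) one_pos
    (by positivity) (by norm_num)
    (fun z _ => abs_secondDiff_le_of_lipschitzOnWith
      ((φ.contDiff (n := 1)).differentiable one_ne_zero).differentiableOn hK.lipschitzOnWith
      (lt_add_one ‖z‖))
    (abs_secondDiff_le_of_abs_le hφ x) z⟩

lemma tendsto_setIntegral_norm_gt {E F : Type*} [NormedAddCommGroup E] [MeasurableSpace E]
    [OpensMeasurableSpace E] [NormedAddCommGroup F] [NormedSpace ℝ F] {μ : Measure E}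
    (h0 : μ {0} = 0) {g : E → F} (hg : Integrable g μ) :
    Tendsto (fun ε : ℝ => ∫ z in {z | ε < ‖z‖}, g z ∂μ) (𝓝[>] 0) (𝓝 (∫ z, g z ∂μ)) := by
  have hmeas : ∀ ε : ℝ, MeasurableSet {z : E | ε < ‖z‖} :=
    fun ε => measurableSet_lt measurable_const measurable_norm
  simp_rw [← integral_indicator (hmeas _)]
  refine tendsto_integral_filter_of_dominated_convergence (fun z => ‖g z‖)
    (Eventually.of_forall fun ε => hg.aestronglyMeasurable.indicator (hmeas ε))
    (Eventually.of_forall fun ε => ae_of_all _ fun z => norm_indicator_le_norm_self _ _) hg.norm ?_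
  filter_upwards [measure_eq_zero_iff_ae_notMem.1 h0] with z hz
  refine tendsto_const_nhds.congr' ?_
  filter_upwards [Ioo_mem_nhdsGT (norm_pos_iff.2 hz)] with ε hε
  exact (indicator_of_mem (show z ∈ {z : E | ε < ‖z‖} from hε.2) g).symm

lemma exists_forall_add_le_of_sSup_lt {X : Type*} [TopologicalSpace X] {w g : X → ℝ}
    (hw : Continuous w) (hg : Continuous g) (hgc : HasCompactSupport g)
    (hbdd : BddAbove (range w)) {x₀ : X} (hx₀ : sSup (range w) < w x₀ + g x₀) :
    ∃ x, ∀ y, w y + g y ≤ w x + g x := by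
  have hx₀g : x₀ ∈ tsupport g := subset_tsupport g fun h => by
    rw [h, add_zero] at hx₀
    exact hx₀.not_ge (le_csSup hbdd (mem_range_self x₀))
  obtain ⟨x, -, hmax⟩ := hgc.exists_isMaxOn ⟨x₀, hx₀g⟩ (hw.add hg).continuousOn
  refine ⟨x, fun y => ?_⟩
  by_cases hy : y ∈ tsupport g
  · exact hmax hy
  · calc w y + g y = w y := by rw [image_eq_zero_of_notMem_tsupport hy, add_zero]
      _ ≤ sSup (range w) := le_csSup hbdd (mem_range_self y)
      _ ≤ w x₀ + g x₀ := hx₀.le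
      _ ≤ w x + g x := hmax hx₀g

def psTrunc (N : ℕ) (s m : ℝ) (v : Pt N → ℝ) (x : Pt N) (ε : ℝ) : ℝ :=
  ∫ z in {z : Pt N | ε < ‖z‖}, (v x - v (x + z)) * psKernel N s m z

section psTrunc

variable {N : ℕ} {s m : ℝ}

lemma psOp_eq_of_tendsto {u : Pt N → ℝ} {x : Pt N} {T : ℝ}
    (hT : Tendsto (psTrunc N s m u x) (𝓝[>] 0) (𝓝 T)) :
    psOp N s m u x = cNs N s * m ^ ((N : ℝ) / 2 + s) * T + m ^ (2 * s) * u x := by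
  suffices h : (fun ε : ℝ => ∫ y in {y : Pt N | ε < dist x y}, (u x - u y) *
      dist x y ^ (-((N : ℝ) / 2 + s)) * besselK ((N : ℝ) / 2 + s) (m * dist x y)) =
      psTrunc N s m u x by
    rw [psOp, h, hT.limUnder_eq]
  funext ε
  rw [psTrunc, ← (measurePreserving_add_left volume x).setIntegral_preimage_emb
    (measurableEmbedding_addLeft x)]
  simp [psKernel, mul_assoc]

lemma psOp_const (C : ℝ) (x : Pt N) : psOp N s m (fun _ => C) x = m ^ (2 * s) * C := by
  have h : psTrunc N s m (fun _ => C) x = fun _ => 0 := by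
    funext ε; simp [psTrunc]
  rw [psOp_eq_of_tendsto (T := 0) (by rw [h]; exact tendsto_const_nhds), mul_zero, zero_add]

lemma integrableOn_mul_psKernel_of_norm_gt (hs : 0 < s) (hm : 0 < m) {g : Pt N → ℝ}
    (hg : Measurable g) {M : ℝ} (hgM : ∀ z, |g z| ≤ M) {ε : ℝ} (hε : 0 < ε) :
    IntegrableOn (fun z => g z * psKernel N s m z) {z | ε < ‖z‖} :=
  ((integrableOn_psKernel_of_norm_gt hs hm hε).const_mul M).mono'
    (hg.mul measurable_psKernel).aestronglyMeasurable <| ae_of_all _ fun z => by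
      rw [Real.norm_eq_abs, abs_mul, abs_of_nonneg (psKernel_nonneg z)]
      exact mul_le_mul_of_nonneg_right (hgM z) (psKernel_nonneg z)

variable {v : Pt N → ℝ} {B : ℝ}

lemma integrableOn_psTrunc_integrand (hs : 0 < s) (hm : 0 < m) (hv : Measurable v)
    (hvb : ∀ y, |v y| ≤ B) (x : Pt N) {ε : ℝ} (hε : 0 < ε) :
    IntegrableOn (fun z => (v x - v (x + z)) * psKernel N s m z) {z | ε < ‖z‖} :=
  integrableOn_mul_psKernel_of_norm_gt hs hm (by fun_prop) (M := 2 * B)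
    (fun z => (abs_sub _ _).trans (by linarith [hvb x, hvb (x + z)])) hε

lemma psTrunc_eq_half_integral_secondDiff (hs : 0 < s) (hm : 0 < m) (hv : Measurable v)
    (hvb : ∀ y, |v y| ≤ B) (x : Pt N) {ε : ℝ} (hε : 0 < ε) :
    psTrunc N s m v x ε = 1 / 2 * ∫ z in {z | ε < ‖z‖},
      (2 * v x - v (x + z) - v (x - z)) * psKernel N s m z := by
  have hneg : ∫ z in {z : Pt N | ε < ‖z‖}, (v x - v (x - z)) * psKernel N s m z =
      psTrunc N s m v x ε := by
    rw [psTrunc, ← (Measure.measurePreserving_neg volume).setIntegral_preimage_emb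
      (MeasurableEquiv.neg _).measurableEmbedding]
    simp [psKernel, sub_eq_add_neg]
  have hint' : IntegrableOn (fun z => (v x - v (x - z)) * psKernel N s m z) {z | ε < ‖z‖} :=
    integrableOn_mul_psKernel_of_norm_gt hs hm (by fun_prop) (M := 2 * B)
      (fun z => (abs_sub _ _).trans (by linarith [hvb x, hvb (x - z)])) hε
  calc psTrunc N s m v x ε = 1 / 2 * (psTrunc N s m v x ε + psTrunc N s m v x ε) := by ring
    _ = 1 / 2 * ∫ z in {z | ε < ‖z‖},
          ((v x - v (x + z)) * psKernel N s m z + (v x - v (x - z)) * psKernel N s m z) := by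
        rw [integral_add (integrableOn_psTrunc_integrand hs hm hv hvb x hε) hint', hneg]; rfl
    _ = _ := by congr 2; funext z; ring

lemma psTrunc_le (hN : 1 ≤ N) (hs : s ∈ Ioo 0 1) (hm : 0 < m) (hv : Measurable v)
    (hvb : ∀ y, |v y| ≤ B) {x : Pt N} {K : ℝ} (hK0 : 0 ≤ K)
    (hK : ∀ z, |2 * v x - v (x + z) - v (x - z)| ≤ K * min (‖z‖ ^ 2) 1) {ε : ℝ} (hε : 0 < ε) :
    psTrunc N s m v x ε ≤ K / 2 * ∫ z, min (‖z‖ ^ 2) 1 * psKernel N s m z := by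
  have hmaj := integrable_min_sq_one_mul_psKernel hN hs hm
  have hD : IntegrableOn (fun z => (2 * v x - v (x + z) - v (x - z)) * psKernel N s m z)
      {z | ε < ‖z‖} :=
    integrableOn_mul_psKernel_of_norm_gt hs.1 hm (by fun_prop)
      (abs_secondDiff_le_of_abs_le hvb x) hε
  rw [psTrunc_eq_half_integral_secondDiff hs.1 hm hv hvb x hε]
  calc 1 / 2 * ∫ z in {z | ε < ‖z‖}, (2 * v x - v (x + z) - v (x - z)) * psKernel N s m z
      ≤ 1 / 2 * ∫ z in {z | ε < ‖z‖}, K * (min (‖z‖ ^ 2) 1 * psKernel N s m z) := by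
        gcongr 1 / 2 * ?_
        refine setIntegral_mono_on hD (hmaj.integrableOn.const_mul K)
          (measurableSet_lt measurable_const measurable_norm) fun z _ => ?_
        rw [← mul_assoc]
        exact mul_le_mul_of_nonneg_right ((le_abs_self _).trans (hK z)) (psKernel_nonneg z)
    _ ≤ 1 / 2 * (K * ∫ z, min (‖z‖ ^ 2) 1 * psKernel N s m z) := by
        rw [integral_const_mul]
        gcongr 1 / 2 * (K * ?_)
        exact setIntegral_le_integral hmaj (ae_of_all _ fun z =>
          mul_nonneg (le_min (sq_nonneg _) zero_le_one) (psKernel_nonneg z))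
    _ = K / 2 * ∫ z, min (‖z‖ ^ 2) 1 * psKernel N s m z := by ring

lemma tendsto_psTrunc (hN : 1 ≤ N) (hs : s ∈ Ioo 0 1) (hm : 0 < m) (hv : Measurable v)
    (hvb : ∀ y, |v y| ≤ B) {x : Pt N} {K : ℝ}
    (hK : ∀ z, |2 * v x - v (x + z) - v (x - z)| ≤ K * min (‖z‖ ^ 2) 1) :
    Tendsto (psTrunc N s m v x) (𝓝[>] 0)
      (𝓝 (1 / 2 * ∫ z, (2 * v x - v (x + z) - v (x - z)) * psKernel N s m z)) := by
  have : Nontrivial (Pt N) := Module.nontrivial_of_finrank_pos (R := ℝ) (by simp; omega)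
  have hint : Integrable fun z => (2 * v x - v (x + z) - v (x - z)) * psKernel N s m z :=
    ((integrable_min_sq_one_mul_psKernel hN hs hm).const_mul K).mono'
      ((by fun_prop : Measurable fun z => 2 * v x - v (x + z) - v (x - z)).mul
        measurable_psKernel).aestronglyMeasurable <| ae_of_all _ fun z => by
          rw [Real.norm_eq_abs, abs_mul, abs_of_nonneg (psKernel_nonneg z), ← mul_assoc]
          exact mul_le_mul_of_nonneg_right (hK z) (psKernel_nonneg z)
  refine ((tendsto_setIntegral_norm_gt (measure_singleton 0) hint).const_mul _).congr' ?_
  filter_upwards [self_mem_nhdsWithin] with ε hε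
  exact (psTrunc_eq_half_integral_secondDiff hs.1 hm hv hvb x hε).symm

lemma psTrunc_sub_comp_add (hs : 0 < s) (hm : 0 < m) (hv : Measurable v) (hvb : ∀ y, |v y| ≤ B)
    (h x : Pt N) {ε : ℝ} (hε : 0 < ε) :
    psTrunc N s m (fun y => v y - v (y + h)) x ε =
      psTrunc N s m v x ε - psTrunc N s m v (x + h) ε := by
  rw [psTrunc, psTrunc, psTrunc, ← integral_sub (integrableOn_psTrunc_integrand hs hm hv hvb x hε)
    (integrableOn_psTrunc_integrand hs hm hv hvb (x + h) hε)]
  congr 1; funext z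
  rw [add_right_comm x h z]; ring

lemma neg_psTrunc_le_of_forall_add_le (hs : 0 < s) (hm : 0 < m) (hv : Measurable v)
    (hvb : ∀ y, |v y| ≤ B) {g : Pt N → ℝ} (hg : Measurable g) {M : ℝ} (hgM : ∀ y, |g y| ≤ M)
    {x : Pt N} (hmax : ∀ y, v y + g y ≤ v x + g x) {ε : ℝ} (hε : 0 < ε) :
    -psTrunc N s m g x ε ≤ psTrunc N s m v x ε := by
  rw [psTrunc, psTrunc, ← integral_neg]
  refine setIntegral_mono_on (integrableOn_psTrunc_integrand hs hm hg hgM x hε).neg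
    (integrableOn_psTrunc_integrand hs hm hv hvb x hε)
    (measurableSet_lt measurable_const measurable_norm) fun z _ => ?_
  rw [← neg_mul]
  exact mul_le_mul_of_nonneg_right (by linarith [hmax (x + z)]) (psKernel_nonneg z)

end psTrunc

lemma C11At.continuousAt {N : ℕ} {u : Pt N → ℝ} {x : Pt N} (hu : C11At N u x) :
    ContinuousAt u x :=
  let ⟨_, hρ, hd, _⟩ := hu
  (hd.differentiableAt (ball_mem_nhds x hρ)).continuousAt

lemma C11loc.c11At {N : ℕ} {u : Pt N → ℝ} (hu : C11loc N univ u) (x : Pt N) : C11At N u x :=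
  let ⟨ρ, hρ, _, hd, hlip⟩ := hu x (mem_univ x)
  ⟨ρ, hρ, hd, hlip⟩

lemma nonpos_of_forall_mul_sub_le {P A S : ℝ} (hP : 0 < P) (hA : 0 ≤ A)
    (h : ∀ δ > 0, P * (S - δ) ≤ A * δ) : S ≤ 0 := by
  refine le_of_forall_pos_le_add fun ε hε => le_of_mul_le_mul_left ?_ hP
  have hPA : 0 < P + A := by positivity
  have := h (ε * P / (P + A)) (by positivity)
  have hδ : (P + A) * (ε * P / (P + A)) = ε * P := mul_div_cancel₀ _ hPA.ne'
  nlinarith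

lemma cNs_pos {N : ℕ} {s : ℝ} (hs : s ∈ Ioo 0 1) : 0 < cNs N s := by
  have := Real.Gamma_pos_of_pos (show 0 < 2 - s by linarith [hs.2])
  have := mul_pos hs.1 (sub_pos.2 hs.2)
  unfold cNs
  positivity

section Comparison

variable {N : ℕ} {s m : ℝ} (hN : 1 ≤ N) (hs : s ∈ Ioo 0 1) (hm : 0 < m)
include hN hs hm

lemma C11At.exists_tendsto_psTrunc {u : Pt N → ℝ} {x : Pt N} (hx : C11At N u x)
    (hu : Measurable u) {B : ℝ} (hub : ∀ y, |u y| ≤ B) :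
    ∃ T, Tendsto (psTrunc N s m u x) (𝓝[>] 0) (𝓝 T) := by
  obtain ⟨ρ, hρ, hd, K, hlip⟩ := hx
  have hB : 0 ≤ B := (abs_nonneg _).trans (hub x)
  exact ⟨_, tendsto_psTrunc hN hs hm hu hub fun z => abs_le_mul_min_sq_one hρ (by positivity)
    (by positivity) (fun z hz => abs_secondDiff_le_of_lipschitzOnWith hd hlip hz)
    (abs_secondDiff_le_of_abs_le hub x) z⟩

lemma exists_near_sSup_psTrunc_limit_ge {v : Pt N → ℝ} (hv : Continuous v) {B : ℝ}
    (hvb : ∀ y, |v y| ≤ B) {T : Pt N → ℝ}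
    (hT : ∀ x, Tendsto (psTrunc N s m v x) (𝓝[>] 0) (𝓝 (T x))) :
    ∃ C, 0 ≤ C ∧ ∀ δ > 0, ∃ x, sSup (range v) - δ < v x ∧ -(C * δ) ≤ T x := by
  let φ : ContDiffBump (0 : Pt N) := ⟨1, 2, one_pos, one_lt_two⟩
  obtain ⟨K, hK0, hK⟩ := φ.exists_abs_secondDiff_le
  set Λ := ∫ z, min (‖z‖ ^ 2) 1 * psKernel N s m z
  have hΛ : 0 ≤ Λ := integral_nonneg fun z =>
    mul_nonneg (le_min (sq_nonneg _) zero_le_one) (psKernel_nonneg z)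
  refine ⟨K * Λ, by positivity, fun δ hδ => ?_⟩
  have hbdd : BddAbove (range v) :=
    ⟨B, by rintro _ ⟨y, rfl⟩; exact (le_abs_self _).trans (hvb y)⟩
  obtain ⟨_, ⟨x₀, rfl⟩, hx₀⟩ := exists_lt_of_lt_csSup (range_nonempty v) (sub_lt_self _ hδ)
  set g : Pt N → ℝ := fun y => 2 * δ * φ (y - x₀)
  have hg : Continuous g := continuous_const.mul (φ.continuous.comp (continuous_sub_right x₀))
  have hgx₀ : g x₀ = 2 * δ := by
    simp only [g, sub_self]
    rw [φ.one_of_mem_closedBall (mem_closedBall_self φ.rIn_pos.le), mul_one]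
  have hgb : ∀ y, |g y| ≤ 2 * δ := fun y => by
    rw [abs_of_nonneg (mul_nonneg (by positivity) φ.nonneg)]
    exact mul_le_of_le_one_right (by positivity) φ.le_one
  obtain ⟨x, hx⟩ := exists_forall_add_le_of_sSup_lt hv hg
    (φ.hasCompactSupport.comp_homeomorph (Homeomorph.subRight x₀)).mul_left hbdd
    (x₀ := x₀) (by linarith)
  refine ⟨x, by linarith [hx x₀, hgb x, le_abs_self (g x)], ?_⟩
  have hgK : ∀ z, |2 * g x - g (x + z) - g (x - z)| ≤ 2 * δ * K * min (‖z‖ ^ 2) 1 := fun z => by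
    have := hK (x - x₀) z
    simp only [g, show x + z - x₀ = x - x₀ + z by abel, show x - z - x₀ = x - x₀ - z by abel]
    rw [show 2 * (2 * δ * φ (x - x₀)) - 2 * δ * φ (x - x₀ + z) - 2 * δ * φ (x - x₀ - z) =
      2 * δ * (2 * φ (x - x₀) - φ (x - x₀ + z) - φ (x - x₀ - z)) by ring, abs_mul,
      abs_of_pos (by positivity), mul_assoc (2 * δ)]
    exact mul_le_mul_of_nonneg_left this (by positivity)
  refine ge_of_tendsto (hT x) (eventually_nhdsWithin_of_forall fun ε (hε : 0 < ε) => ?_)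
  calc -(K * Λ * δ) ≤ -psTrunc N s m g x ε := by
        have := psTrunc_le hN hs hm hg.measurable hgb (by positivity) hgK hε
        linarith
    _ ≤ psTrunc N s m v x ε := neg_psTrunc_le_of_forall_add_le hs.1 hm hv.measurable hvb
        hg.measurable hgb hx hε

lemma le_apply_add_of_psTrunc_equation {u : Pt N → ℝ} (hu : Continuous u) {B : ℝ}
    (hub : ∀ y, |u y| ≤ B) {T : Pt N → ℝ}
    (hT : ∀ x, Tendsto (psTrunc N s m u x) (𝓝[>] 0) (𝓝 (T x))) {f : ℝ → ℝ} {c μ L : ℝ}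
    (hc : 0 < c) (heq : ∀ x, c * T x + μ * u x = f (u x)) (hL : L < μ)
    (hf : ∀ x y, u y < u x → f (u x) - f (u y) ≤ L * (u x - u y)) (x h : Pt N) :
    u x ≤ u (x + h) := by
  set w : Pt N → ℝ := fun y => u y - u (y + h)
  have hw : Continuous w := hu.sub (hu.comp (continuous_add_const h))
  have hwb : ∀ y, |w y| ≤ 2 * B := fun y =>
    (abs_sub _ _).trans (by linarith [hub y, hub (y + h)])
  have hTw : ∀ y, Tendsto (psTrunc N s m w y) (𝓝[>] 0) (𝓝 (T y - T (y + h))) := fun y =>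
    ((hT y).sub (hT (y + h))).congr' <| eventually_nhdsWithin_of_forall fun ε hε =>
      (psTrunc_sub_comp_add hs.1 hm hu.measurable hub h y hε).symm
  obtain ⟨C, hC0, hC⟩ := exists_near_sSup_psTrunc_limit_ge hN hs hm hw hwb hTw
  have hP : 0 < μ - L := sub_pos.2 hL
  have key : ∀ δ > 0, (μ - L) * (sSup (range w) - δ) ≤ c * C * δ := fun δ hδ => by
    obtain ⟨y, hy, hTy⟩ := hC δ hδ
    have hdiff : c * (T y - T (y + h)) + μ * w y = f (u y) - f (u (y + h)) := by
      linear_combination heq y - heq (y + h)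
    have hwy : (μ - L) * w y ≤ c * C * δ := by
      rcases lt_or_ge (u (y + h)) (u y) with hlt | hge
      · nlinarith [hf y (y + h) hlt]
      · calc (μ - L) * w y ≤ 0 :=
            mul_nonpos_of_nonneg_of_nonpos hP.le (by simp only [w]; linarith)
          _ ≤ c * C * δ := by positivity
    exact (mul_le_mul_of_nonneg_left hy.le hP.le).trans hwy
  have hS : sSup (range w) ≤ 0 := nonpos_of_forall_mul_sub_le hP (by positivity) key
  have hwx : w x ≤ 0 :=
    (le_csSup ⟨2 * B, by rintro _ ⟨y, rfl⟩; exact (le_abs_self _).trans (hwb y)⟩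
      (mem_range_self x)).trans hS
  simp only [w] at hwx
  linarith

end Comparison

theorem liouville_theorem_general
    (N : ℕ) (hN : 1 ≤ N) (s m : ℝ) (hs : s ∈ Set.Ioo (0:ℝ) 1) (hm : 0 < m)
    (u : Pt N → ℝ) (f : ℝ → ℝ)
    (hreg : C11loc N Set.univ u)
    (hb : ∃ B : ℝ, ∀ x, |u x| ≤ B)
    (heq : ∀ x : Pt N, psOp N s m u x = f (u x))
    (hf : ∃ L < m ^ (2*s), ∀ t₁ t₂ : ℝ,
      sInf (Set.range u) ≤ t₂ → t₂ < t₁ → t₁ ≤ sSup (Set.range u) →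
      f t₁ - f t₂ ≤ L * (t₁ - t₂)) :
    ∃ C : ℝ, (∀ x : Pt N, u x = C) ∧ f C = m ^ (2*s) * C := by
  obtain ⟨B, hB⟩ := hb
  obtain ⟨L, hL, hLf⟩ := hf
  have hu : Continuous u := continuous_iff_continuousAt.2 fun x => (hreg.c11At x).continuousAt
  choose T hT using fun x => (hreg.c11At x).exists_tendsto_psTrunc hN hs hm hu.measurable hB
  have hc : 0 < cNs N s * m ^ ((N : ℝ) / 2 + s) := mul_pos (cNs_pos hs) (Real.rpow_pos_of_pos hm _)
  have hbdd : Bornology.IsBounded (range u) :=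
    isBounded_iff_forall_norm_le.2 ⟨B, by rintro _ ⟨z, rfl⟩; exact hB z⟩
  have hmono : ∀ x h, u x ≤ u (x + h) :=
    le_apply_add_of_psTrunc_equation hN hs hm hu hB hT hc (f := f)
      (fun x => by rw [← heq x, psOp_eq_of_tendsto (hT x)]) hL fun x y hlt =>
        hLf _ _ (csInf_le hbdd.bddBelow (mem_range_self y)) hlt
          (le_csSup hbdd.bddAbove (mem_range_self x))
  have hconst : ∀ x, u x = u 0 := fun x =>
    le_antisymm (by simpa using hmono x (-x)) (by simpa using hmono 0 x)
  refine ⟨u 0, hconst, ?_⟩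
  calc f (u 0) = psOp N s m u 0 := (heq 0).symm
    _ = psOp N s m (fun _ => u 0) 0 := by rw [← funext hconst]
    _ = m ^ (2 * s) * u 0 := psOp_const _ _

/-- Liouville theorem. -/
theorem liouville_theorem
    (N : ℕ) (hN : 1 ≤ N) (s m : ℝ) (hs : s ∈ Set.Ioo (0:ℝ) 1) (hm : 0 < m)
    (u : Pt N → ℝ) (f : ℝ → ℝ)
    (hu : memLs N s u) (hreg : C11loc N Set.univ u)
    (hb : ∃ B : ℝ, ∀ x, |u x| ≤ B)
    (heq : ∀ x : Pt N, psOp N s m u x = f (u x))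
    (hf : ∃ L < m ^ (2*s), ∀ t₁ t₂ : ℝ,
      sInf (Set.range u) ≤ t₂ → t₂ < t₁ → t₁ ≤ sSup (Set.range u) →
      f t₁ - f t₂ ≤ L * (t₁ - t₂)) :
    ∃ C : ℝ, (∀ x : Pt N, u x = C) ∧ f C = m ^ (2*s) * C :=
  liouville_theorem_general N hN s m hs hm u f hreg hb heq hf
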